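/- arXiv:2110.10717 — 2 statements merged into one kernel-verified Lean document; each statement's English description precedes it below -/
import Mathlib

section
/- Let (z_n) ⊂ D with |z_n| → 1 be interpolating for H∞. Then (z_n) is interpolating for the Bloch space: for every bounded sequence (a_n) there exists f ∈ ℬ with (1-|z_n|²) f'(z_n) = a_n for all n. -/
/-!
The open mapping theorem upgrades `H^∞`-interpolation to interpolation with a uniform bound `M`.
Averaging the interpolants `g_ε` of the sign patterns `ε ∈ {±1}^N` against the Rademacher
functions gives `f_k` with `f_k (z_j) = δ_kj` and, by Bessel's inequality, `∑ |f_k|² ≤ M²`.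
With `φ_k` the Blaschke factor vanishing at `z_k` and `|a_k| ≤ A`, `F_N = ∑_{k<N} a_k f_k² φ_k`
is bounded by `A M²` and satisfies `(1 - |z_j|²) F_N' (z_j) = a_j` for `j < N`: the square kills the
derivatives of the terms `k ≠ j`. By Montel's theorem the `F_N` converge locally uniformly along
an ultrafilter; the limit is bounded, hence Bloch by the Cauchy estimate, and interpolates all
of `a`.
-/

open Metric Filter

/-- `z` is an interpolating sequence for `H^∞` of the unit disk. -/
def InterpolatingHinf (z : ℕ → ℂ) : Prop :=
  ∀ a : ℕ → ℂ, BddAbove (Set.range fun n => ‖a n‖) →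
    ∃ f : ℂ → ℂ, DifferentiableOn ℂ f (ball (0 : ℂ) 1) ∧
      (∃ C : ℝ, ∀ w ∈ ball (0 : ℂ) 1, ‖f w‖ ≤ C) ∧
      ∀ n, f (z n) = a n

open ComplexConjugate
open scoped BoundedContinuousFunction

section CauchyEstimates

variable {E : Type*} [NormedAddCommGroup E] [NormedSpace ℂ E]

theorem norm_deriv_le_of_forall_norm_le {f : ℂ → E} {c : ℂ} {r B : ℝ}
    (hd : DifferentiableOn ℂ f (ball c r)) (hB : ∀ w ∈ ball c r, ‖f w‖ ≤ B) (hr : 0 < r) :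
    ‖deriv f c‖ ≤ 2 * B / r := by
  refine Complex.norm_deriv_le_div_of_mapsTo_ball hd (fun w hw => ?_) hr
  rw [mem_closedBall, two_mul]
  exact (dist_le_norm_add_norm _ _).trans (add_le_add (hB w hw) (hB c (mem_ball_self hr)))

theorem one_sub_sq_mul_norm_deriv_le {f : ℂ → E} {B : ℝ}
    (hd : DifferentiableOn ℂ f (ball 0 1)) (hB : ∀ w ∈ ball (0 : ℂ) 1, ‖f w‖ ≤ B)
    {w : ℂ} (hw : w ∈ ball (0 : ℂ) 1) : (1 - ‖w‖ ^ 2) * ‖deriv f w‖ ≤ 4 * B := by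
  have hw1 : ‖w‖ < 1 := mem_ball_zero_iff.1 hw
  have hsub : ball w (1 - ‖w‖) ⊆ ball 0 1 := ball_subset_ball' (by rw [dist_zero_right]; linarith)
  have hcauchy := norm_deriv_le_of_forall_norm_le (hd.mono hsub) (fun v hv => hB v (hsub hv))
    (sub_pos.2 hw1)
  rw [le_div_iff₀ (sub_pos.2 hw1)] at hcauchy
  have hB0 : 0 ≤ B := (norm_nonneg _).trans (hB w hw)
  nlinarith [norm_nonneg w, norm_nonneg (deriv f w)]

theorem norm_sub_le_mul_of_forall_norm_le {f : ℂ → E} {x y : ℂ} {r B : ℝ}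
    (hd : DifferentiableOn ℂ f (ball x r)) (hB : ∀ w ∈ ball x r, ‖f w‖ ≤ B)
    (hy : y ∈ ball x (r / 2)) : ‖f y - f x‖ ≤ 4 * B / r * ‖y - x‖ := by
  have hr : 0 < r := by linarith [pos_of_mem_ball hy]
  have hsub : ∀ u ∈ ball x (r / 2), ball u (r / 2) ⊆ ball x r := fun u hu =>
    ball_subset_ball' (by linarith [mem_ball.1 hu])
  refine Convex.norm_image_sub_le_of_norm_deriv_le (fun u hu => ?_) (fun u hu => ?_)
    (convex_ball x (r / 2)) (mem_ball_self (half_pos hr)) hy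
  · exact hd.differentiableAt (isOpen_ball.mem_nhds (hsub u hu (mem_ball_self (half_pos hr))))
  · calc ‖deriv f u‖ ≤ 2 * B / (r / 2) := norm_deriv_le_of_forall_norm_le
          (hd.mono (hsub u hu)) (fun w hw => hB w (hsub u hu hw)) (half_pos hr)
      _ = 4 * B / r := by field_simp; ring

theorem equicontinuousAt_of_forall_norm_le {ι : Type*} {F : ι → ℂ → E} {U : Set ℂ} {B : ℝ}
    (hU : IsOpen U) (hF : ∀ i, DifferentiableOn ℂ (F i) U) (hB : ∀ i, ∀ w ∈ U, ‖F i w‖ ≤ B)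
    {x : ℂ} (hx : x ∈ U) : EquicontinuousAt F x := by
  obtain ⟨r, hr, hrU⟩ := Metric.isOpen_iff.1 hU x hx
  refine Metric.equicontinuousAt_of_continuity_modulus (fun y => 4 * B / r * ‖y - x‖) ?_ F ?_
  · have hcont : Continuous fun y : ℂ => 4 * B / r * ‖y - x‖ := by fun_prop
    simpa using hcont.tendsto x
  · filter_upwards [ball_mem_nhds x (half_pos hr)] with y hy i
    rw [dist_comm, dist_eq_norm]
    exact norm_sub_le_mul_of_forall_norm_le ((hF i).mono hrU) (fun w hw => hB i w (hrU hw)) hy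

end CauchyEstimates

theorem Ultrafilter.exists_tendstoLocallyUniformlyOn_of_forall_norm_le {ι : Type*}
    (𝒰 : Ultrafilter ι) {F : ι → ℂ → ℂ} {U : Set ℂ} {B : ℝ} (hU : IsOpen U)
    (hF : ∀ i, DifferentiableOn ℂ (F i) U) (hB : ∀ i, ∀ w ∈ U, ‖F i w‖ ≤ B) :
    ∃ f : ℂ → ℂ, DifferentiableOn ℂ f U ∧ (∀ w ∈ U, ‖f w‖ ≤ B) ∧
      TendstoLocallyUniformlyOn F f 𝒰 U := by
  have hpt : ∀ w ∈ U,
      Tendsto (fun i => F i w) 𝒰 (nhds (limUnder (𝒰 : Filter ι) fun i => F i w)) := by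
    intro w hw
    obtain ⟨c, -, hc⟩ := (isCompact_closedBall (0 : ℂ) B).ultrafilter_le_nhds
      (𝒰.map fun i => F i w) (le_principal_iff.2 <| Ultrafilter.mem_map.2 <|
        univ_mem' fun i => mem_closedBall_zero_iff.2 (hB i w hw))
    exact tendsto_nhds_limUnder ⟨c, hc⟩
  set f := fun w => limUnder (𝒰 : Filter ι) fun i => F i w
  have hloc : TendstoLocallyUniformlyOn F f 𝒰 U := by
    refine (tendstoLocallyUniformlyOn_iff_forall_isCompact hU).2 fun K hKU hK => ?_
    have := (EquicontinuousOn.tendsto_uniformOnFun_iff_pi' (𝔖 := {K}) (by rintro _ rfl; exact hK)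
      (by rintro _ rfl x hx; exact (equicontinuousAt_of_forall_norm_le hU hF hB
        (hKU hx)).equicontinuousWithinAt _) 𝒰 f).2 ?_
    · exact UniformOnFun.tendsto_iff_tendstoUniformlyOn.1 this K rfl
    · rw [tendsto_pi_nhds]
      rintro ⟨w, hw⟩
      exact hpt w (hKU (by simpa using hw))
  exact ⟨f, hloc.differentiableOn (Eventually.of_forall hF) hU,
    fun w hw => le_of_tendsto (hpt w hw).norm (Eventually.of_forall fun i => hB i w hw), hloc⟩

namespace Complex

noncomputable def blaschkeFactor (ζ : ℂ) (w : ℂ) : ℂ := (w - ζ) / (1 - conj ζ * w)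

theorem norm_one_sub_conj_mul_sq_sub_norm_sub_sq (ζ w : ℂ) :
    ‖1 - conj ζ * w‖ ^ 2 - ‖w - ζ‖ ^ 2 = (1 - ‖ζ‖ ^ 2) * (1 - ‖w‖ ^ 2) := by
  simp only [Complex.sq_norm, normSq_apply, sub_re, sub_im, mul_re, mul_im, one_re, one_im,
    conj_re, conj_im]
  ring

theorem one_sub_conj_mul_ne_zero {ζ w : ℂ} (h : ‖ζ‖ * ‖w‖ < 1) : 1 - conj ζ * w ≠ 0 := by
  rw [sub_ne_zero]
  intro h1
  have := congrArg norm h1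
  rw [norm_mul, RCLike.norm_conj, norm_one] at this
  linarith

theorem differentiableOn_blaschkeFactor {ζ : ℂ} (hζ : ‖ζ‖ < 1) :
    DifferentiableOn ℂ (blaschkeFactor ζ) (ball 0 1) := by
  intro w hw
  have hw : ‖w‖ < 1 := mem_ball_zero_iff.1 hw
  refine (((differentiableAt_id.sub_const ζ).div ((differentiableAt_const _).sub
    (differentiableAt_id.const_mul _)) ?_)).differentiableWithinAt
  exact one_sub_conj_mul_ne_zero (by nlinarith [norm_nonneg ζ, norm_nonneg w])

theorem norm_blaschkeFactor_le_one {ζ w : ℂ} (hζ : ‖ζ‖ < 1) (hw : ‖w‖ < 1) :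
    ‖blaschkeFactor ζ w‖ ≤ 1 := by
  have hne := one_sub_conj_mul_ne_zero (ζ := ζ) (w := w)
    (by nlinarith [norm_nonneg ζ, norm_nonneg w])
  rw [blaschkeFactor, norm_div, div_le_one (norm_pos_iff.2 hne), ← sq_le_sq₀ (norm_nonneg _)
    (norm_nonneg _), ← sub_nonneg, norm_one_sub_conj_mul_sq_sub_norm_sub_sq]
  exact mul_nonneg (by nlinarith [norm_nonneg ζ]) (by nlinarith [norm_nonneg w])

@[simp]
theorem blaschkeFactor_self (ζ : ℂ) : blaschkeFactor ζ ζ = 0 := by simp [blaschkeFactor]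

theorem hasDerivAt_blaschkeFactor_self {ζ : ℂ} (hζ : ‖ζ‖ < 1) :
    HasDerivAt (blaschkeFactor ζ) (1 - (‖ζ‖ : ℂ) ^ 2)⁻¹ ζ := by
  have hne := one_sub_conj_mul_ne_zero (ζ := ζ) (w := ζ) (by nlinarith [norm_nonneg ζ])
  have := ((hasDerivAt_id ζ).sub_const ζ).div
    (((hasDerivAt_id ζ).const_mul (conj ζ)).const_sub 1) hne
  refine this.congr_deriv ?_
  simp only [id, sub_self, zero_mul, sub_zero, mul_one, one_mul, conj_mul'] at hne ⊢
  field_simp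

end Complex

section Rademacher

variable {ι : Type*}

def rademacher (k : ι) : (ι → ℤˣ) →* ℂ :=
  ((Int.castRingHom ℂ : ℤ →* ℂ).comp (Units.coeHom ℤ)).comp (Pi.evalMonoidHom (fun _ => ℤˣ) k)

theorem rademacher_apply (k : ι) (ε : ι → ℤˣ) : rademacher k ε = ((ε k : ℤ) : ℂ) := rfl

theorem conj_rademacher (k : ι) (ε : ι → ℤˣ) : conj (rademacher k ε) = rademacher k ε := by
  simp [rademacher_apply]

theorem norm_rademacher (k : ι) (ε : ι → ℤˣ) : ‖rademacher k ε‖ = 1 := by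
  simp [rademacher_apply, abs_unit_intCast]

theorem rademacher_mul_self (k : ι) (ε : ι → ℤˣ) : rademacher k ε * rademacher k ε = 1 := by
  rw [← map_mul, rademacher_apply, Pi.mul_apply, Int.units_mul_self, Units.val_one, Int.cast_one]

variable [Fintype ι] [DecidableEq ι]

theorem sum_rademacher_mul_rademacher (k j : ι) :
    ∑ ε : ι → ℤˣ, rademacher k ε * rademacher j ε = if k = j then 2 ^ Fintype.card ι else 0 := by
  split_ifs with h
  · subst h
    simp [rademacher_mul_self]
  · refine sum_hom_units_eq_zero (rademacher k * rademacher j) fun h1 => ?_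
    have := congrArg (· (Pi.mulSingle k (-1))) h1
    simp [rademacher_apply, Ne.symm h] at this
    norm_num at this

noncomputable def rademacherCoeff (g : (ι → ℤˣ) → ℂ) (k : ι) : ℂ :=
  (2 ^ Fintype.card ι)⁻¹ * ∑ ε, rademacher k ε * g ε

theorem rademacherCoeff_rademacher (k j : ι) :
    rademacherCoeff (rademacher j) k = if k = j then 1 else 0 := by
  rw [rademacherCoeff, sum_rademacher_mul_rademacher]
  split_ifs <;> simp

theorem sum_norm_rademacherCoeff_sq_le (g : (ι → ℤˣ) → ℂ) :
    ∑ k, ‖rademacherCoeff g k‖ ^ 2 ≤ (2 ^ Fintype.card ι)⁻¹ * ∑ ε, ‖g ε‖ ^ 2 := by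
  set s : ℝ := (Real.sqrt (2 ^ Fintype.card ι))⁻¹
  have hs : (s : ℂ) ^ 2 = (2 ^ Fintype.card ι)⁻¹ := by
    rw [← Complex.ofReal_pow, inv_pow, Real.sq_sqrt (by positivity)]
    push_cast; rfl
  -- rescaling by `s = 2 ^ (-card ι / 2)` makes the Rademacher functions orthonormal
  let v : ((ι → ℤˣ) → ℂ) → EuclideanSpace ℂ (ι → ℤˣ) := fun a => WithLp.toLp 2 fun ε => s * a ε
  have hinner (a b : (ι → ℤˣ) → ℂ) :
      inner ℂ (v a) (v b) = (2 ^ Fintype.card ι)⁻¹ * ∑ ε, conj (a ε) * b ε := by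
    rw [PiLp.inner_apply, ← hs, Finset.mul_sum]
    refine Finset.sum_congr rfl fun ε _ => ?_
    simp only [v, RCLike.inner_apply', map_mul, Complex.conj_ofReal]
    ring
  have horth : Orthonormal ℂ fun k => v (rademacher k) := by
    rw [orthonormal_iff_ite]
    intro k j
    simp only [hinner, conj_rademacher, sum_rademacher_mul_rademacher]
    split_ifs <;> simp
  have hnorm : ‖v g‖ ^ 2 = (2 ^ Fintype.card ι)⁻¹ * ∑ ε, ‖g ε‖ ^ 2 := by
    rw [EuclideanSpace.norm_sq_eq, Finset.mul_sum]
    refine Finset.sum_congr rfl fun ε _ => ?_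
    simp [v, mul_pow, s, Real.sq_sqrt]
  calc ∑ k, ‖rademacherCoeff g k‖ ^ 2 = ∑ k, ‖inner ℂ (v (rademacher k)) (v g)‖ ^ 2 := by
        simp only [hinner, conj_rademacher, rademacherCoeff]
    _ ≤ ‖v g‖ ^ 2 := horth.sum_inner_products_le (v g)
    _ = _ := hnorm

end Rademacher

theorem exists_dual_family_sum_norm_sq_le {ι : Type*} [Fintype ι] [DecidableEq ι] {U : Set ℂ}
    {z : ι → ℂ} {M : ℝ}
    (hM : ∀ ε : ι → ℤˣ, ∃ g : ℂ → ℂ, DifferentiableOn ℂ g U ∧ (∀ w ∈ U, ‖g w‖ ≤ M) ∧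
      ∀ j, g (z j) = rademacher j ε) :
    ∃ f : ι → ℂ → ℂ, (∀ k, DifferentiableOn ℂ (f k) U) ∧
      (∀ k j, f k (z j) = if k = j then 1 else 0) ∧ ∀ w ∈ U, ∑ k, ‖f k w‖ ^ 2 ≤ M ^ 2 := by
  choose g hgd hgM hgz using hM
  refine ⟨fun k w => rademacherCoeff (fun ε => g ε w) k, fun k => ?_, fun k j => ?_,
    fun w hw => (sum_norm_rademacherCoeff_sq_le _).trans ?_⟩
  · exact (DifferentiableOn.fun_sum fun ε _ => (hgd ε).const_mul _).const_mul _
  · simp only [hgz]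
    exact rademacherCoeff_rademacher k j
  · calc (2 ^ Fintype.card ι)⁻¹ * ∑ ε, ‖g ε w‖ ^ 2
        ≤ (2 ^ Fintype.card ι)⁻¹ * ∑ _ε : ι → ℤˣ, M ^ 2 := by
          gcongr with ε
          exact hgM ε w hw
      _ = M ^ 2 := by simp

theorem exists_bloch_interpolant_of_dual_family {ι : Type*} [Fintype ι] [DecidableEq ι]
    {z : ι → ℂ} (hz : ∀ k, z k ∈ ball (0 : ℂ) 1) {f : ι → ℂ → ℂ} {M A : ℝ}
    (hfd : ∀ k, DifferentiableOn ℂ (f k) (ball 0 1))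
    (hfz : ∀ k j, f k (z j) = if k = j then 1 else 0)
    (hfM : ∀ w ∈ ball (0 : ℂ) 1, ∑ k, ‖f k w‖ ^ 2 ≤ M ^ 2)
    {a : ι → ℂ} (ha : ∀ k, ‖a k‖ ≤ A) (hA : 0 ≤ A) :
    ∃ F : ℂ → ℂ, DifferentiableOn ℂ F (ball 0 1) ∧ (∀ w ∈ ball (0 : ℂ) 1, ‖F w‖ ≤ A * M ^ 2) ∧
      ∀ j, (1 - (‖z j‖ : ℂ) ^ 2) * deriv F (z j) = a j := by
  have hz1 : ∀ k, ‖z k‖ < 1 := fun k => mem_ball_zero_iff.1 (hz k)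
  refine ⟨fun w => ∑ k, a k * (f k w ^ 2 * Complex.blaschkeFactor (z k) w), ?_, ?_, fun j => ?_⟩
  · exact DifferentiableOn.fun_sum fun k _ =>
      (((hfd k).pow 2).mul (Complex.differentiableOn_blaschkeFactor (hz1 k))).const_mul _
  · intro w hw
    calc ‖∑ k, a k * (f k w ^ 2 * Complex.blaschkeFactor (z k) w)‖
        ≤ ∑ k, A * ‖f k w‖ ^ 2 := by
          refine (norm_sum_le _ _).trans (Finset.sum_le_sum fun k _ => ?_)
          rw [norm_mul, norm_mul, norm_pow]
          have hφ := Complex.norm_blaschkeFactor_le_one (hz1 k) (mem_ball_zero_iff.1 hw)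
          gcongr
          · exact ha k
          · exact mul_le_of_le_one_right (by positivity) hφ
      _ ≤ A * M ^ 2 := by rw [← Finset.mul_sum]; exact mul_le_mul_of_nonneg_left (hfM w hw) hA
  · have hderiv : ∀ k, HasDerivAt (fun w => a k * (f k w ^ 2 * Complex.blaschkeFactor (z k) w))
        (if k = j then a j * (1 - (‖z j‖ : ℂ) ^ 2)⁻¹ else 0) (z j) := by
      intro k
      have hf := ((hfd k).differentiableAt (isOpen_ball.mem_nhds (hz j))).hasDerivAt
      by_cases hkj : k = j
      · subst hkj
        simpa [hfz] using
          ((hf.pow 2).mul (Complex.hasDerivAt_blaschkeFactor_self (hz1 k))).const_mul (a k)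
      · have hφ := ((Complex.differentiableOn_blaschkeFactor (hz1 k)).differentiableAt
          (isOpen_ball.mem_nhds (hz j))).hasDerivAt
        simpa [hfz, hkj] using ((hf.pow 2).mul hφ).const_mul (a k)
    rw [(HasDerivAt.fun_sum fun k _ => hderiv k).deriv, Fintype.sum_ite_eq']
    have : (1 : ℂ) - (‖z j‖ : ℂ) ^ 2 ≠ 0 := by
      rw [← Complex.ofReal_pow, ← Complex.ofReal_one, ← Complex.ofReal_sub, Complex.ofReal_ne_zero]
      nlinarith [norm_nonneg (z j), hz1 j]
    field_simp

def boundedHolomorphic (U : Set ℂ) : Submodule ℂ (U →ᵇ ℂ) where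
  carrier := {F | ∃ g : ℂ → ℂ, DifferentiableOn ℂ g U ∧ ∀ w : U, g w = F w}
  add_mem' := fun ⟨g₁, hg₁, h₁⟩ ⟨g₂, hg₂, h₂⟩ => ⟨g₁ + g₂, hg₁.add hg₂, fun w => by simp [h₁, h₂]⟩
  zero_mem' := ⟨0, differentiableOn_const 0, fun _ => rfl⟩
  smul_mem' := fun c _ ⟨g, hg, h⟩ => ⟨c • g, hg.const_smul c, fun w => by simp [h]⟩

theorem isClosed_boundedHolomorphic {U : Set ℂ} (hU : IsOpen U) :
    IsClosed (boundedHolomorphic U : Set (U →ᵇ ℂ)) := by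
  refine IsSeqClosed.isClosed fun F L hF hFL => ?_
  choose g hgd hg using hF
  refine ⟨Function.extend Subtype.val L 0, ?_, Subtype.val_injective.extend_apply L 0⟩
  have : TendstoUniformlyOn g (Function.extend Subtype.val L 0) atTop U := by
    rw [Metric.tendstoUniformlyOn_iff]
    intro ε hε
    filter_upwards [(tendsto_iff_dist_tendsto_zero.1 hFL).eventually (gt_mem_nhds hε)]
      with n hn w hw
    rw [Subtype.val_injective.extend_apply L 0 ⟨w, hw⟩, hg n ⟨w, hw⟩, dist_comm]
    exact (BoundedContinuousFunction.dist_coe_le_dist _).trans_lt hn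
  exact this.tendstoLocallyUniformlyOn.differentiableOn (Eventually.of_forall hgd) hU

theorem InterpolatingHinf.exists_norm_le {z : ℕ → ℂ} (hz : ∀ n, z n ∈ ball (0 : ℂ) 1)
    (hint : InterpolatingHinf z) :
    ∃ M, ∀ a : ℕ → ℂ, (∀ n, ‖a n‖ ≤ 1) → ∃ g : ℂ → ℂ, DifferentiableOn ℂ g (ball 0 1) ∧
      (∀ w ∈ ball (0 : ℂ) 1, ‖g w‖ ≤ M) ∧ ∀ n, g (z n) = a n := by
  have := (isClosed_boundedHolomorphic (isOpen_ball (x := (0 : ℂ)) (ε := 1))).completeSpace_coe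
  let T := (BoundedContinuousFunction.compContinuousCLM ℂ ℂ
    ⟨fun n => (⟨z n, hz n⟩ : ball (0 : ℂ) 1), continuous_of_discreteTopology⟩).comp
    (boundedHolomorphic (ball (0 : ℂ) 1)).subtypeL
  have hT : Function.Surjective T := by
    intro y
    obtain ⟨f, hfd, ⟨C, hC⟩, hf⟩ :=
      hint y ⟨‖y‖, by rintro _ ⟨n, rfl⟩; exact y.norm_coe_le_norm n⟩
    refine ⟨⟨.ofNormedAddCommGroup (fun w : ball (0 : ℂ) 1 => f w) hfd.continuousOn.domRestrict C
      fun w => hC w w.2, f, hfd, fun w => rfl⟩, ?_⟩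
    ext n
    exact hf n
  obtain ⟨C, hC0, hC⟩ := T.exists_preimage_norm_le hT
  refine ⟨C, fun a ha => ?_⟩
  let y : ℕ →ᵇ ℂ := .ofNormedAddCommGroup a continuous_of_discreteTopology 1 ha
  obtain ⟨⟨G, g, hgd, hg⟩, hGa, hGC⟩ := hC y
  refine ⟨g, hgd, fun w hw => ?_, fun n => ?_⟩
  · calc ‖g w‖ = ‖G ⟨w, hw⟩‖ := by rw [hg ⟨w, hw⟩]
      _ ≤ ‖G‖ := G.norm_coe_le_norm _
      _ ≤ C * ‖y‖ := hGC
      _ ≤ C * 1 := by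
        gcongr
        exact BoundedContinuousFunction.norm_ofNormedAddCommGroup_le _ zero_le_one ha
      _ = C := mul_one C
  · rw [hg ⟨z n, hz n⟩]
    exact congrArg (· n) hGa

theorem InterpolatingHinf.exists_bounded_approx {z : ℕ → ℂ} (hz : ∀ n, z n ∈ ball (0 : ℂ) 1)
    (hint : InterpolatingHinf z) {a : ℕ → ℂ} {A : ℝ} (ha : ∀ n, ‖a n‖ ≤ A) :
    ∃ B, ∀ N, ∃ F : ℂ → ℂ, DifferentiableOn ℂ F (ball 0 1) ∧ (∀ w ∈ ball (0 : ℂ) 1, ‖F w‖ ≤ B) ∧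
      ∀ n < N, (1 - (‖z n‖ : ℂ) ^ 2) * deriv F (z n) = a n := by
  obtain ⟨M, hM⟩ := hint.exists_norm_le hz
  refine ⟨A * M ^ 2, fun N => ?_⟩
  obtain ⟨f, hfd, hfz, hfM⟩ :=
    exists_dual_family_sum_norm_sq_le (U := ball 0 1) (z := fun j : Fin N => z j) fun ε => by
      obtain ⟨g, hgd, hgM, hgz⟩ := hM (fun n => if h : n < N then rademacher ⟨n, h⟩ ε else 0)
        fun n => by split_ifs <;> simp [norm_rademacher]
      exact ⟨g, hgd, hgM, fun j => by simp [hgz, j.2]⟩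
  obtain ⟨F, hFd, hFB, hF⟩ := exists_bloch_interpolant_of_dual_family (z := fun j : Fin N => z j)
    (fun j => hz j) hfd hfz hfM (a := fun j : Fin N => a j) (fun j => ha j)
    ((norm_nonneg _).trans (ha 0))
  exact ⟨F, hFd, hFB, fun n hn => hF ⟨n, hn⟩⟩

theorem interpolatingHinf_interpolating_bloch_general
    (z : ℕ → ℂ) (hz : ∀ n, z n ∈ ball (0 : ℂ) 1)
    (hint : InterpolatingHinf z) :
    ∀ a : ℕ → ℂ, BddAbove (Set.range fun n => ‖a n‖) →
      ∃ f : ℂ → ℂ, DifferentiableOn ℂ f (ball (0 : ℂ) 1) ∧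
        (∃ C : ℝ, ∀ w ∈ ball (0 : ℂ) 1, (1 - ‖w‖ ^ 2) * ‖deriv f w‖ ≤ C) ∧
        ∀ n, ((1 : ℂ) - (‖z n‖ : ℂ) ^ 2) * deriv f (z n) = a n := by
  rintro a ⟨A, hA⟩
  obtain ⟨B, hB⟩ := hint.exists_bounded_approx hz fun n => hA ⟨n, rfl⟩
  choose F hFd hFB hF using hB
  obtain ⟨f, hfd, hfB, hFf⟩ :=
    (Ultrafilter.of atTop).exists_tendstoLocallyUniformlyOn_of_forall_norm_le isOpen_ball hFd hFB
  refine ⟨f, hfd, ⟨4 * B, fun w hw => one_sub_sq_mul_norm_deriv_le hfd hfB hw⟩, fun n => ?_⟩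
  have hlim := ((hFf.deriv (Eventually.of_forall hFd) isOpen_ball).tendsto_at (hz n)).const_mul
    (1 - (‖z n‖ : ℂ) ^ 2)
  refine tendsto_nhds_unique hlim (tendsto_const_nhds.congr' ?_)
  filter_upwards [Ultrafilter.of_le atTop (eventually_gt_atTop n)] with N hN
  exact (hF N n hN).symm

/-- Interpolating sequences for H∞ are interpolating for the Bloch space. -/
theorem interpolatingHinf_interpolating_bloch
    (z : ℕ → ℂ) (hz : ∀ n, z n ∈ ball (0 : ℂ) 1)
    (hlim : Tendsto (fun n => ‖z n‖) atTop (nhds 1))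
    (hint : InterpolatingHinf z) :
    ∀ a : ℕ → ℂ, BddAbove (Set.range fun n => ‖a n‖) →
      ∃ f : ℂ → ℂ, DifferentiableOn ℂ f (ball (0 : ℂ) 1) ∧
        (∃ C : ℝ, ∀ w ∈ ball (0 : ℂ) 1, (1 - ‖w‖ ^ 2) * ‖deriv f w‖ ≤ C) ∧
        ∀ n, ((1 : ℂ) - (‖z n‖ : ℂ) ^ 2) * deriv f (z n) = a n :=
  interpolatingHinf_interpolating_bloch_general z hz hint
end

section
/- Suppose (z_n) ⊂ D has the property that for every sequence (a_n) converging to 0 there exists f ∈ ℬ with (1-|z_n|²) f'(z_n) = a_n for all n (i.e., (z_n) is c₀-interpolating for ℬ). Then (z_n) is interpolating for ℬ: every bounded sequence (a_n) can be so interpolated. -/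
/-!
Let `S M` be the set of data `a` interpolated, `(1 - |z n|²) f'(z n) = a n`, by some `f` with
`f 0 = 0` and Bloch seminorm at most `M`. Such `f` form a normal family, so `S M` is closed
under pointwise convergence of the data. By hypothesis the sets `S M` cover `c₀`, and they
behave like the balls of a seminorm, so the Baire category theorem (the argument behind the
open mapping theorem) gives `C` with `a ∈ S (C ‖a‖)` for every `a ∈ c₀`. A bounded sequence is
the pointwise limit of its truncations, which all lie in `S (C sup |a n|)`.
-/

open Metric Filter Set Topology
open scoped ZeroAtInfty

theorem exists_forall_mem_mul_norm_of_isClosed {E : Type*} [NormedAddCommGroup E]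
    [NormedSpace ℝ E] [CompleteSpace E] {S : ℝ → Set E} (hmono : Monotone S)
    (hclosed : ∀ M, IsClosed (S M)) (hcover : ∀ x, ∃ M, x ∈ S M)
    (hsub : ∀ {x y M N}, x ∈ S M → y ∈ S N → x - y ∈ S (M + N))
    (hsmul : ∀ {x M} {c : ℝ}, 0 ≤ c → x ∈ S M → c • x ∈ S (c * M)) :
    ∃ C, 0 ≤ C ∧ ∀ x, x ∈ S (C * ‖x‖) := by
  have hunion : ⋃ n : ℕ, S n = univ := eq_univ_of_forall fun x ↦ by
    obtain ⟨M, hM⟩ := hcover x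
    exact mem_iUnion.2 ⟨⌈M⌉₊, hmono (Nat.le_ceil M) hM⟩
  obtain ⟨n, x₀, hx₀⟩ := nonempty_interior_of_iUnion_of_closed (fun n : ℕ ↦ hclosed n) hunion
  obtain ⟨ε, hε, hball⟩ := Metric.mem_nhds_iff.1 (mem_interior_iff_mem_nhds.1 hx₀)
  refine ⟨2 * n / ε, by positivity, fun x ↦ ?_⟩
  rcases eq_or_ne x 0 with rfl | hx
  · obtain ⟨M, hM⟩ := hcover 0
    simpa using hsmul le_rfl hM
  have hxpos : 0 < ‖x‖ := norm_pos_iff.2 hx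
  -- `x` is a multiple of the difference of two points of the ball `ball x₀ ε ⊆ S n`
  set u : E := (ε / (2 * ‖x‖)) • x
  have hu : ‖u‖ < ε := by
    rw [norm_smul, Real.norm_of_nonneg (by positivity)]
    field_simp
    linarith
  have hplus : x₀ + u ∈ S n := hball (by simpa [mem_ball_iff_norm] using hu)
  have hminus : x₀ - u ∈ S n := hball (by simpa [mem_ball_iff_norm] using hu)
  have hx_eq : (‖x‖ / ε) • ((x₀ + u) - (x₀ - u)) = x := by
    rw [add_sub_sub_cancel, ← two_smul ℝ, smul_smul, smul_smul]
    field_simp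
    simp
  convert hsmul (c := ‖x‖ / ε) (by positivity) (hsub hplus hminus) using 2
  · ring
  · exact hx_eq.symm

theorem EquicontinuousOn.tendstoUniformlyOn_of_tendsto {ι X α : Type*} [TopologicalSpace X]
    [UniformSpace α] {F : ι → X → α} {f : X → α} {K : Set X} {l : Filter ι}
    (hK : IsCompact K) (hF : EquicontinuousOn F K) (hlim : ∀ x ∈ K, Tendsto (F · x) l (𝓝 (f x))) :
    TendstoUniformlyOn F f l K := by
  have key := (EquicontinuousOn.tendsto_uniformOnFun_iff_pi' (𝔖 := {K}) (by simpa using hK)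
    (by simpa using hF) l f).2 <| tendsto_pi_nhds.2 fun ⟨x, hx⟩ ↦ hlim x (by simpa using hx)
  exact UniformOnFun.tendsto_iff_tendstoUniformlyOn.1 key K rfl

namespace ZeroAtInftyContinuousMap

theorem continuous_coeFn {α β : Type*} [TopologicalSpace α] [SeminormedAddCommGroup β] :
    Continuous fun f : C₀(α, β) ↦ (f : α → β) :=
  BoundedContinuousFunction.continuous_coe.comp isometry_toBCF.continuous

variable {β : Type*} [NormedAddCommGroup β]

def truncate (a : ℕ → β) (N : ℕ) : C₀(ℕ, β) where
  toFun n := if n ≤ N then a n else 0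
  continuous_toFun := continuous_of_discreteTopology
  zero_at_infty' := by
    rw [cocompact_eq_atTop]
    exact tendsto_const_nhds.congr' <| (eventually_gt_atTop N).mono fun n hn ↦ by
      simp [Nat.not_le.2 hn]

theorem truncate_apply (a : ℕ → β) (N n : ℕ) : truncate a N n = if n ≤ N then a n else 0 := rfl

theorem norm_truncate_le {a : ℕ → β} {B : ℝ} (hB : 0 ≤ B) (ha : ∀ n, ‖a n‖ ≤ B) (N : ℕ) :
    ‖truncate a N‖ ≤ B := by
  rw [← norm_toBCF_eq_norm, BoundedContinuousFunction.norm_le hB]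
  intro n
  change ‖truncate a N n‖ ≤ B
  rw [truncate_apply]
  split_ifs
  exacts [ha n, by simpa using hB]

theorem tendsto_truncate (a : ℕ → β) : Tendsto (fun N ↦ ⇑(truncate a N)) atTop (𝓝 a) :=
  tendsto_pi_nhds.2 fun n ↦ tendsto_const_nhds.congr' <|
    (eventually_ge_atTop n).mono fun N hN ↦ by simp [truncate_apply, hN]

end ZeroAtInftyContinuousMap

def BlochBoundedBy (f : ℂ → ℂ) (M : ℝ) : Prop :=
  DifferentiableOn ℂ f (ball 0 1) ∧ ∀ w ∈ ball (0 : ℂ) 1, (1 - ‖w‖ ^ 2) * ‖deriv f w‖ ≤ M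

namespace BlochBoundedBy

variable {f g : ℂ → ℂ} {M N : ℝ}

theorem differentiableAt (hf : BlochBoundedBy f M) {w : ℂ} (hw : w ∈ ball (0 : ℂ) 1) :
    DifferentiableAt ℂ f w :=
  hf.1.differentiableAt (isOpen_ball.mem_nhds hw)

theorem sub (hf : BlochBoundedBy f M) (hg : BlochBoundedBy g N) :
    BlochBoundedBy (fun w ↦ f w - g w) (M + N) := by
  refine ⟨hf.1.sub hg.1, fun w hw ↦ ?_⟩
  have hw' : 0 ≤ 1 - ‖w‖ ^ 2 := by
    have := mem_ball_zero_iff.1 hw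
    nlinarith [norm_nonneg w]
  rw [deriv_fun_sub (hf.differentiableAt hw) (hg.differentiableAt hw)]
  calc (1 - ‖w‖ ^ 2) * ‖deriv f w - deriv g w‖
      ≤ (1 - ‖w‖ ^ 2) * ‖deriv f w‖ + (1 - ‖w‖ ^ 2) * ‖deriv g w‖ := by
        rw [← mul_add]; exact mul_le_mul_of_nonneg_left (norm_sub_le _ _) hw'
    _ ≤ M + N := add_le_add (hf.2 w hw) (hg.2 w hw)

theorem const_mul (hf : BlochBoundedBy f M) (c : ℂ) :
    BlochBoundedBy (fun w ↦ c * f w) (‖c‖ * M) := by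
  refine ⟨hf.1.const_mul c, fun w hw ↦ ?_⟩
  rw [deriv_const_mul c (hf.differentiableAt hw), norm_mul, mul_left_comm]
  exact mul_le_mul_of_nonneg_left (hf.2 w hw) (norm_nonneg c)

theorem lipschitzOnWith (hf : BlochBoundedBy f M) {r : ℝ} (hr : r < 1) :
    LipschitzOnWith (M / (1 - r ^ 2)).toNNReal f (closedBall 0 r) := by
  have hball : closedBall (0 : ℂ) r ⊆ ball 0 1 := closedBall_subset_ball hr
  refine (convex_closedBall 0 r).lipschitzOnWith_of_nnnorm_deriv_le
    (fun w hw ↦ hf.differentiableAt (hball hw)) fun w hw ↦ ?_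
  have hwr : ‖w‖ ≤ r := mem_closedBall_zero_iff.1 hw
  have hr2 : 0 < 1 - r ^ 2 := by nlinarith [norm_nonneg w]
  rw [← NNReal.coe_le_coe, coe_nnnorm, Real.coe_toNNReal', le_max_iff, le_div_iff₀ hr2]
  left
  calc ‖deriv f w‖ * (1 - r ^ 2) ≤ (1 - ‖w‖ ^ 2) * ‖deriv f w‖ := by
        rw [mul_comm]
        gcongr
    _ ≤ M := hf.2 w (hball hw)

theorem of_tendstoLocallyUniformlyOn {ι : Type*} {l : Filter ι} [l.NeBot] {F : ι → ℂ → ℂ}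
    (hF : ∀ i, BlochBoundedBy (F i) M) (hFf : TendstoLocallyUniformlyOn F f l (ball 0 1)) :
    BlochBoundedBy f M := by
  have hFd : ∀ᶠ i in l, DifferentiableOn ℂ (F i) (ball 0 1) := .of_forall fun i ↦ (hF i).1
  refine ⟨hFf.differentiableOn hFd isOpen_ball, fun w hw ↦ ?_⟩
  have hderiv := (hFf.deriv hFd isOpen_ball).tendsto_at hw
  exact le_of_tendsto (hderiv.norm.const_mul _) (.of_forall fun i ↦ (hF i).2 w hw)

theorem norm_le_mul_norm (hf : BlochBoundedBy f M) (hf0 : f 0 = 0) {w : ℂ}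
    (hw : w ∈ ball (0 : ℂ) 1) : ‖f w‖ ≤ (M / (1 - ‖w‖ ^ 2)).toNNReal * ‖w‖ := by
  have h := (hf.lipschitzOnWith (mem_ball_zero_iff.1 hw)).norm_sub_le
    (mem_closedBall_zero_iff.2 le_rfl) (mem_closedBall_self (norm_nonneg w))
  rwa [hf0, sub_zero, sub_zero] at h

theorem exists_tendstoLocallyUniformlyOn {ι : Type*} (u : Ultrafilter ι) {F : ι → ℂ → ℂ}
    (hF : ∀ i, BlochBoundedBy (F i) M) (hF0 : ∀ i, F i 0 = 0) :
    ∃ f, TendstoLocallyUniformlyOn F f u (ball 0 1) := by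
  have hpt : ∀ w, ∃ y, w ∈ ball (0 : ℂ) 1 → Tendsto (F · w) u (𝓝 y) := fun w ↦ by
    by_cases hw : w ∈ ball (0 : ℂ) 1
    · have hmem : ∀ i, F i w ∈ closedBall 0 ((M / (1 - ‖w‖ ^ 2)).toNNReal * ‖w‖) :=
        fun i ↦ mem_closedBall_zero_iff.2 ((hF i).norm_le_mul_norm (hF0 i) hw)
      obtain ⟨y, -, hy⟩ := (isCompact_closedBall _ _).ultrafilter_le_nhds' (u.map (F · w))
        (Ultrafilter.mem_map.2 (univ_mem' hmem))
      exact ⟨y, fun _ ↦ hy⟩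
    · exact ⟨0, fun h ↦ absurd h hw⟩
  choose f hf using hpt
  refine ⟨f, (tendstoLocallyUniformlyOn_iff_forall_isCompact isOpen_ball).2 fun K hK hKc ↦ ?_⟩
  obtain ⟨r, hr, hKr⟩ := exists_lt_subset_ball hKc.isClosed hK
  have hequi : EquicontinuousOn F (closedBall 0 r) :=
    (LipschitzOnWith.uniformEquicontinuousOn F _ fun i ↦ (hF i).lipschitzOnWith hr).equicontinuousOn
  refine (hequi.tendstoUniformlyOn_of_tendsto (isCompact_closedBall 0 r) fun w hw ↦ ?_).mono
    (hKr.trans ball_subset_closedBall)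
  exact hf w (closedBall_subset_ball hr hw)

end BlochBoundedBy

def blochInterpolable (z : ℕ → ℂ) (M : ℝ) : Set (ℕ → ℂ) :=
  {a | ∃ f, BlochBoundedBy f M ∧ f 0 = 0 ∧
    ∀ n, ((1 : ℂ) - (‖z n‖ : ℂ) ^ 2) * deriv f (z n) = a n}

section blochInterpolable

variable {z : ℕ → ℂ} {a b : ℕ → ℂ} {M N : ℝ}

theorem blochInterpolable_mono : Monotone (blochInterpolable z) := by
  rintro M N hMN a ⟨f, hf, hf0, hfa⟩
  exact ⟨f, ⟨hf.1, fun w hw ↦ (hf.2 w hw).trans hMN⟩, hf0, hfa⟩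

theorem mem_blochInterpolable_of_interpolates {f : ℂ → ℂ}
    (hf : DifferentiableOn ℂ f (ball 0 1))
    (hfM : ∀ w ∈ ball (0 : ℂ) 1, (1 - ‖w‖ ^ 2) * ‖deriv f w‖ ≤ M)
    (hfa : ∀ n, ((1 : ℂ) - (‖z n‖ : ℂ) ^ 2) * deriv f (z n) = a n) :
    a ∈ blochInterpolable z M :=
  ⟨fun w ↦ f w - f 0, ⟨hf.sub_const _, by simpa only [deriv_sub_const] using hfM⟩, sub_self _,
    by simpa only [deriv_sub_const] using hfa⟩

theorem sub_mem_blochInterpolable (hz : ∀ n, z n ∈ ball (0 : ℂ) 1)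
    (ha : a ∈ blochInterpolable z M) (hb : b ∈ blochInterpolable z N) :
    a - b ∈ blochInterpolable z (M + N) := by
  obtain ⟨f, hf, hf0, hfa⟩ := ha
  obtain ⟨g, hg, hg0, hgb⟩ := hb
  refine ⟨_, hf.sub hg, by simp [hf0, hg0], fun n ↦ ?_⟩
  rw [deriv_fun_sub (hf.differentiableAt (hz n)) (hg.differentiableAt (hz n)), mul_sub,
    hfa, hgb, Pi.sub_apply]

theorem smul_mem_blochInterpolable (hz : ∀ n, z n ∈ ball (0 : ℂ) 1) {c : ℝ} (hc : 0 ≤ c)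
    (ha : a ∈ blochInterpolable z M) :
    c • a ∈ blochInterpolable z (c * M) := by
  obtain ⟨f, hf, hf0, hfa⟩ := ha
  refine ⟨_, by simpa [abs_of_nonneg hc] using hf.const_mul c, by simp [hf0], fun n ↦ ?_⟩
  rw [deriv_const_mul _ (hf.differentiableAt (hz n)), mul_left_comm, hfa, Pi.smul_apply,
    Complex.real_smul]

theorem isClosed_blochInterpolable (hz : ∀ n, z n ∈ ball (0 : ℂ) 1) (M : ℝ) :
    IsClosed (blochInterpolable z M) := by
  refine IsSeqClosed.isClosed fun A a hA hAa ↦ ?_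
  choose F hF hF0 hFA using hA
  let u : Ultrafilter ℕ := .of atTop
  have hu : (u : Filter ℕ) ≤ atTop := Ultrafilter.of_le atTop
  obtain ⟨f, hFf⟩ := BlochBoundedBy.exists_tendstoLocallyUniformlyOn u hF hF0
  have hFd : ∀ᶠ k in (u : Filter ℕ), DifferentiableOn ℂ (F k) (ball 0 1) :=
    .of_forall fun k ↦ (hF k).1
  refine ⟨f, .of_tendstoLocallyUniformlyOn hF hFf, ?_, fun n ↦ ?_⟩
  · exact tendsto_nhds_unique (hFf.tendsto_at (mem_ball_self one_pos)) (by simp [hF0])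
  · have hderiv := ((hFf.deriv hFd isOpen_ball).tendsto_at (hz n)).const_mul
      ((1 : ℂ) - (‖z n‖ : ℂ) ^ 2)
    refine tendsto_nhds_unique hderiv ?_
    simpa only [Function.comp_apply, hFA] using (tendsto_pi_nhds.1 hAa n).mono_left hu

end blochInterpolable

/-- c₀-interpolating sequences for the Bloch space are interpolating. -/
theorem c0_interpolating_is_interpolating_bloch
    (z : ℕ → ℂ) (hz : ∀ n, z n ∈ ball (0 : ℂ) 1)
    (h : ∀ a : ℕ → ℂ, Tendsto a atTop (nhds 0) →
      ∃ f : ℂ → ℂ, DifferentiableOn ℂ f (ball (0 : ℂ) 1) ∧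
        (∃ C : ℝ, ∀ w ∈ ball (0 : ℂ) 1, (1 - ‖w‖ ^ 2) * ‖deriv f w‖ ≤ C) ∧
        ∀ n, ((1 : ℂ) - (‖z n‖ : ℂ) ^ 2) * deriv f (z n) = a n) :
    ∀ a : ℕ → ℂ, BddAbove (Set.range fun n => ‖a n‖) →
      ∃ f : ℂ → ℂ, DifferentiableOn ℂ f (ball (0 : ℂ) 1) ∧
        (∃ C : ℝ, ∀ w ∈ ball (0 : ℂ) 1, (1 - ‖w‖ ^ 2) * ‖deriv f w‖ ≤ C) ∧
        ∀ n, ((1 : ℂ) - (‖z n‖ : ℂ) ^ 2) * deriv f (z n) = a n := by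
  obtain ⟨C, hC0, hC⟩ := exists_forall_mem_mul_norm_of_isClosed
    (S := fun M ↦ (fun x : C₀(ℕ, ℂ) ↦ ⇑x) ⁻¹' blochInterpolable z M)
    (fun _ _ hMN ↦ preimage_mono (blochInterpolable_mono hMN))
    (fun M ↦ (isClosed_blochInterpolable hz M).preimage ZeroAtInftyContinuousMap.continuous_coeFn)
    (fun x ↦ by
      obtain ⟨f, hf, ⟨M, hM⟩, hfx⟩ := h x (by simpa [cocompact_eq_atTop] using x.zero_at_infty')
      exact ⟨M, mem_blochInterpolable_of_interpolates hf hM hfx⟩)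
    (sub_mem_blochInterpolable hz) (smul_mem_blochInterpolable hz)
  rintro a ⟨B, hB⟩
  have haB : ∀ n, ‖a n‖ ≤ B := fun n ↦ hB (mem_range_self n)
  have hB0 : 0 ≤ B := (norm_nonneg _).trans (haB 0)
  have ha : a ∈ blochInterpolable z (C * B) :=
    (isClosed_blochInterpolable hz _).mem_of_tendsto (ZeroAtInftyContinuousMap.tendsto_truncate a)
      (.of_forall fun N ↦ blochInterpolable_mono
        (mul_le_mul_of_nonneg_left (ZeroAtInftyContinuousMap.norm_truncate_le hB0 haB N) hC0)
        (hC _))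
  obtain ⟨f, hf, -, hfa⟩ := ha
  exact ⟨f, hf.1, ⟨_, hf.2⟩, hfa⟩
end
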